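/- (Mechanism-level whole-image dominance underlying Theorem 1.) Let σ > 0, let d ≥ 1 index pixels and T be a finite index set of guided steps, and for each pixel i ∈ {1,…,d} and step t ∈ T let σ_{t,i} > 0, c_{t,i} ∈ ℝ, and m_{t,i} ∈ ℝ, with ∑_{t ∈ T} c_{t,i}²/σ_{t,i}² ≤ 1/σ² for every i. For x ∈ ℝ^d, let P_x denote the product measure on ℝ^{T×d} whose (t,i)-th coordinate is the Gaussian measure on ℝ with mean m_{t,i} + c_{t,i}·x_i and variance σ_{t,i}². Let Φ(t) denote the standard normal CDF, Φ(t) = (2π)^{−1/2}·∫_{−∞}^t e^{−u²/2} du. Then for all x, x' ∈ ℝ^d, every Borel set E ⊆ ℝ^{T×d}, and every a ∈ ℝ: if P_x(E) ≥ Φ(a) then P_{x'}(E) ≥ Φ(a − ‖x − x'‖₂/σ). -/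

import Mathlib

/-!
The two product measures differ only by the shift `δ_{t,i} = c_{t,i} (x'_i - x_i)` of the means.
With `ε² = ∑ δ²/σt²`, their likelihood ratio is `exp (ε S - ε²/2)` for a linear statistic `S`
that is standard normal under `P_x` and `N(ε, 1)` under `P_{x'}`. By the Neyman–Pearson lemma the
half-space `{S ≤ a}` has the least `P_{x'}`-mass among events of `P_x`-mass at least `Φ(a)`, which
gives `P_{x'}(E) ≥ Φ(a - ε)`; the per-pixel filter gives `ε ≤ ‖x - x'‖/σ`.
-/

open MeasureTheory ProbabilityTheory

/-- The standard normal cumulative distribution function. -/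
noncomputable def stdNormalCDF (t : ℝ) : ℝ :=
  ∫ u in Set.Iic t, (Real.sqrt (2 * Real.pi))⁻¹ * Real.exp (-u ^ 2 / 2)

open Real Set
open scoped NNReal ENNReal

lemma stdNormalCDF_eq_integral_gaussianPDFReal (t : ℝ) :
    stdNormalCDF t = ∫ u in Iic t, gaussianPDFReal 0 1 u := by
  simp [stdNormalCDF, gaussianPDFReal]

lemma stdNormalCDF_mono : Monotone stdNormalCDF := fun s t hst => by
  simp only [stdNormalCDF_eq_integral_gaussianPDFReal]
  exact setIntegral_mono_set (integrable_gaussianPDFReal 0 1).integrableOn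
    (ae_of_all _ (gaussianPDFReal_nonneg 0 1)) (ae_of_all _ (Iic_subset_Iic.2 hst))

lemma gaussianReal_zero_one_Iic (t : ℝ) :
    gaussianReal 0 1 (Iic t) = ENNReal.ofReal (stdNormalCDF t) := by
  rw [gaussianReal_apply_eq_integral _ one_ne_zero _, stdNormalCDF_eq_integral_gaussianPDFReal]

lemma gaussianReal_one_Iic (m t : ℝ) :
    gaussianReal m 1 (Iic t) = ENNReal.ofReal (stdNormalCDF (t - m)) := by
  rw [← zero_add m, ← gaussianReal_map_add_const, Measure.map_apply (by fun_prop) measurableSet_Iic,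
    zero_add, ← gaussianReal_zero_one_Iic]
  congr 1
  ext u
  simp [le_sub_iff_add_le]

lemma gaussianReal_add_eq_withDensity (μ δ : ℝ) {v : ℝ≥0} (hv : v ≠ 0) :
    gaussianReal (μ + δ) v = (gaussianReal μ v).withDensity
      fun y => ENNReal.ofReal (exp (δ * (y - μ) / v - δ ^ 2 / (2 * v))) := by
  rw [gaussianReal_of_var_ne_zero _ hv, gaussianReal_of_var_ne_zero _ hv,
    ← withDensity_mul _ (measurable_gaussianPDF _ _) (by fun_prop)]
  congr 1
  ext y
  simp only [Pi.mul_apply, gaussianPDF, gaussianPDFReal_def]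
  rw [← ENNReal.ofReal_mul (by positivity), mul_assoc _ (exp _), ← exp_add]
  congr 3
  have : (v : ℝ) ≠ 0 := by exact_mod_cast hv
  field_simp
  ring

lemma MeasureTheory.Measure.pi_withDensity {ι : Type*} [Fintype ι] {α : ι → Type*}
    [∀ i, MeasurableSpace (α i)]
    (μ : ∀ i, Measure (α i)) [∀ i, IsProbabilityMeasure (μ i)] {f : ∀ i, α i → ℝ≥0∞}
    (hf : ∀ i, Measurable (f i)) [∀ i, SigmaFinite ((μ i).withDensity (f i))] :
    Measure.pi (fun i => (μ i).withDensity (f i))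
      = (Measure.pi μ).withDensity fun ω => ∏ i, f i (ω i) := by
  refine Measure.pi_eq (μ := fun i => (μ i).withDensity (f i)) fun s hs => ?_
  have hind : (univ.pi s).indicator (fun ω => ∏ i, f i (ω i))
      = fun ω => ∏ i, (s i).indicator (f i) (ω i) := by
    ext ω
    by_cases h : ω ∈ univ.pi s
    · simp_all [indicator_of_mem]
    · obtain ⟨i, -, hi⟩ : ∃ i ∈ univ, ω i ∉ s i := by simpa [Set.mem_pi] using h
      rw [indicator_of_notMem h, eq_comm]
      exact Finset.prod_eq_zero (Finset.mem_univ i) (indicator_of_notMem hi _)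
  rw [withDensity_apply _ (.univ_pi hs), ← lintegral_indicator (.univ_pi hs), hind,
    lintegral_prod_eq_prod_lintegral_of_indepFun _ _
      (iIndepFun_pi fun i => ((hf i).indicator (hs i)).aemeasurable)
      fun i => ((hf i).indicator (hs i)).comp (measurable_pi_apply i)]
  refine Finset.prod_congr rfl fun i _ => ?_
  rw [withDensity_apply _ (hs i), ← lintegral_indicator (hs i),
    (measurePreserving_eval μ i).lintegral_comp ((hf i).indicator (hs i))]

lemma withDensity_apply_le_apply_of_measure_le {α : Type*} [MeasurableSpace α] {P : Measure α}
    [IsFiniteMeasure P] {ρ : α → ℝ≥0∞} {A E : Set α} (hA : MeasurableSet A) (hE : MeasurableSet E)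
    {K : ℝ≥0∞} (hle : ∀ ω ∈ A, ρ ω ≤ K) (hge : ∀ ω ∉ A, K ≤ ρ ω) (hAE : P A ≤ P E) :
    P.withDensity ρ A ≤ P.withDensity ρ E := by
  have hdiff : P (A \ E) ≤ P (E \ A) := by
    refine (ENNReal.add_le_add_iff_left (measure_ne_top P (A ∩ E))).1 ?_
    rwa [measure_inter_add_sdiff A hE, inter_comm, measure_inter_add_sdiff E hA]
  rw [withDensity_apply _ hA, withDensity_apply _ hE, ← lintegral_inter_add_sdiff ρ A hE,
    ← lintegral_inter_add_sdiff ρ E hA, inter_comm]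
  refine add_le_add le_rfl ?_
  calc ∫⁻ ω in A \ E, ρ ω ∂P ≤ ∫⁻ _ in A \ E, K ∂P :=
        setLIntegral_mono' (hA.diff hE) fun ω hω => hle ω hω.1
    _ = K * P (A \ E) := setLIntegral_const _ _
    _ ≤ K * P (E \ A) := by gcongr
    _ = ∫⁻ _ in E \ A, K ∂P := (setLIntegral_const _ _).symm
    _ ≤ ∫⁻ ω in E \ A, ρ ω ∂P := setLIntegral_mono' (hE.diff hA) fun ω hω => hge ω hω.2

lemma map_sum_pi_gaussianReal {κ : Type*} [Fintype κ] (μ : κ → ℝ) (v : κ → ℝ≥0) :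
    (Measure.pi fun p => gaussianReal (μ p) (v p)).map (fun ω => ∑ p, ω p)
      = gaussianReal (∑ p, μ p) (∑ p, v p) := by
  refine Measure.ext_of_charFun ?_
  ext t
  rw [charFun_map_sum_pi_eq_prod, Finset.prod_apply]
  simp only [charFun_gaussianReal, ← Complex.exp_sum]
  congr 1
  push_cast
  rw [Finset.sum_sub_distrib, Finset.mul_sum, Finset.sum_mul, Finset.sum_mul, Finset.sum_div]

lemma map_sum_mul_pi_gaussianReal {κ : Type*} [Fintype κ] (w μ : κ → ℝ) (v : κ → ℝ≥0) :
    (Measure.pi fun p => gaussianReal (μ p) (v p)).map (fun ω => ∑ p, w p * ω p)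
      = gaussianReal (∑ p, w p * μ p) (∑ p, ⟨w p ^ 2, sq_nonneg _⟩ * v p) := by
  have hcomp : (fun ω : κ → ℝ => ∑ p, w p * ω p)
      = (fun ω => ∑ p, ω p) ∘ fun ω p => w p * ω p := rfl
  rw [hcomp, ← Measure.map_map (by fun_prop) (by fun_prop),
    Measure.pi_map_pi fun p => by fun_prop]
  simp only [gaussianReal_map_const_mul]
  exact map_sum_pi_gaussianReal _ _

lemma pi_gaussianReal_sum_mul_le {κ : Type*} [Fintype κ] (μ w : κ → ℝ) (v : κ → ℝ≥0)
    (hw : ∑ p, w p ^ 2 * v p = 1) (t : ℝ) :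
    Measure.pi (fun p => gaussianReal (μ p) (v p)) {ω | ∑ p, w p * ω p ≤ t}
      = ENNReal.ofReal (stdNormalCDF (t - ∑ p, w p * μ p)) := by
  have hvar : ∑ p, (⟨w p ^ 2, sq_nonneg _⟩ * v p : ℝ≥0) = 1 := by
    ext
    push_cast
    exact hw
  rw [← gaussianReal_one_Iic, ← hvar, ← map_sum_mul_pi_gaussianReal,
    Measure.map_apply (by fun_prop) measurableSet_Iic]
  rfl

lemma pi_gaussianReal_add_eq_withDensity {κ : Type*} [Fintype κ] (μ δ : κ → ℝ) {v : κ → ℝ≥0}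
    (hv : ∀ p, v p ≠ 0) :
    Measure.pi (fun p => gaussianReal (μ p + δ p) (v p))
      = (Measure.pi fun p => gaussianReal (μ p) (v p)).withDensity fun ω =>
          ENNReal.ofReal (exp (∑ p, (δ p * (ω p - μ p) / v p - δ p ^ 2 / (2 * v p)))) := by
  simp only [gaussianReal_add_eq_withDensity _ _ (hv _)]
  rw [Measure.pi_withDensity _ fun p => by fun_prop]
  congr with ω
  rw [exp_sum, ENNReal.ofReal_prod_of_nonneg fun p _ => (exp_pos _).le]

lemma pi_gaussianReal_add_mul_apply_ge {κ : Type*} [Fintype κ] (μ w : κ → ℝ) {v : κ → ℝ≥0}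
    (hv : ∀ p, v p ≠ 0) (hw : ∑ p, w p ^ 2 * v p = 1) {ε : ℝ} (hε : 0 ≤ ε)
    {E : Set (κ → ℝ)} (hE : MeasurableSet E) {a : ℝ}
    (h : ENNReal.ofReal (stdNormalCDF a) ≤ Measure.pi (fun p => gaussianReal (μ p) (v p)) E) :
    ENNReal.ofReal (stdNormalCDF (a - ε))
      ≤ Measure.pi (fun p => gaussianReal (μ p + ε * v p * w p) (v p)) E := by
  have hv₀ : ∀ p, (v p : ℝ) ≠ 0 := fun p => NNReal.coe_ne_zero.2 (hv p)
  set S : (κ → ℝ) → ℝ := fun ω => ∑ p, w p * ω p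
  set A := {ω | S ω ≤ a + S μ}
  have hPA : Measure.pi (fun p => gaussianReal (μ p) (v p)) A
      = ENNReal.ofReal (stdNormalCDF a) := by
    rw [pi_gaussianReal_sum_mul_le μ w v hw, add_sub_cancel_right]
  have hP'A : Measure.pi (fun p => gaussianReal (μ p + ε * v p * w p) (v p)) A
      = ENNReal.ofReal (stdNormalCDF (a - ε)) := by
    refine (pi_gaussianReal_sum_mul_le (fun p => μ p + ε * v p * w p) w v hw _).trans ?_
    have hmean : ∑ p, w p * (μ p + ε * v p * w p) = S μ + ε * ∑ p, w p ^ 2 * v p := by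
      simp only [S, mul_add, Finset.sum_add_distrib, Finset.mul_sum]
      congr 1
      exact Finset.sum_congr rfl fun p _ => by ring
    rw [hmean, hw, mul_one, add_comm (S μ), add_sub_add_right_eq_sub]
  have hexp : ∀ ω, ∑ p, (ε * v p * w p * (ω p - μ p) / v p - (ε * v p * w p) ^ 2 / (2 * v p))
      = ε * (S ω - S μ) - ε ^ 2 / 2 := fun ω => by
    rw [← mul_one (ε ^ 2), ← hw]
    simp only [S, ← Finset.sum_sub_distrib, Finset.mul_sum, Finset.sum_div]
    refine Finset.sum_congr rfl fun p _ => ?_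
    field_simp [hv₀ p]
  rw [← hP'A, pi_gaussianReal_add_eq_withDensity μ _ hv]
  refine withDensity_apply_le_apply_of_measure_le (K := ENNReal.ofReal (exp (ε * a - ε ^ 2 / 2)))
    (measurableSet_le (by fun_prop) (by fun_prop)) hE (fun ω hω => ?_) (fun ω hω => ?_) (hPA ▸ h)
  · have : S ω - S μ ≤ a := by linarith [show S ω ≤ a + S μ from hω]
    rw [hexp]
    gcongr
  · have : a ≤ S ω - S μ := by linarith [not_le.1 (show ¬S ω ≤ a + S μ from hω)]
    rw [hexp]
    gcongr

lemma pi_gaussianReal_add_apply_ge {κ : Type*} [Fintype κ] (μ δ : κ → ℝ)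
    {v : κ → ℝ≥0} (hv : ∀ p, v p ≠ 0) {E : Set (κ → ℝ)} (hE : MeasurableSet E) {a : ℝ}
    (h : ENNReal.ofReal (stdNormalCDF a) ≤ Measure.pi (fun p => gaussianReal (μ p) (v p)) E) :
    ENNReal.ofReal (stdNormalCDF (a - √(∑ p, δ p ^ 2 / v p)))
      ≤ Measure.pi (fun p => gaussianReal (μ p + δ p) (v p)) E := by
  obtain hzero | hpos := (Finset.sum_nonneg fun p _ => by positivity :
    0 ≤ ∑ p, δ p ^ 2 / v p).eq_or_lt
  · have hδ : ∀ p, δ p = 0 := fun p => by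
      simpa [hv p] using (Finset.sum_eq_zero_iff_of_nonneg fun p _ => by positivity).1
        hzero.symm p (Finset.mem_univ p)
    simpa [hδ, ← hzero] using h
  set ε := √(∑ p, δ p ^ 2 / v p)
  have hε : 0 < ε := sqrt_pos.2 hpos
  have hv₀ : ∀ p, (v p : ℝ) ≠ 0 := fun p => NNReal.coe_ne_zero.2 (hv p)
  have hw : ∑ p, (δ p / (ε * v p)) ^ 2 * v p = 1 := calc
    _ = (∑ p, δ p ^ 2 / v p) / ε ^ 2 := by
      rw [Finset.sum_div]
      exact Finset.sum_congr rfl fun p _ => by field_simp [hv₀ p]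
    _ = 1 := by rw [← sq_sqrt hpos.le, div_self (pow_pos hε 2).ne']
  convert pi_gaussianReal_add_mul_apply_ge μ _ hv hw hε.le hE h using 5
  field_simp [hv₀ _]

lemma sum_sq_mul_div_le_norm_div_sq {ι κ : Type*} [Fintype ι] [Fintype κ] {σ : ℝ}
    {σt c : ι → κ → ℝ} (hfilter : ∀ i, ∑ t, c t i ^ 2 / σt t i ^ 2 ≤ 1 / σ ^ 2)
    (y : EuclideanSpace ℝ κ) :
    ∑ p : ι × κ, (c p.1 p.2 * y p.2) ^ 2 / σt p.1 p.2 ^ 2 ≤ (‖y‖ / σ) ^ 2 := by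
  rw [Fintype.sum_prod_type, Finset.sum_comm, div_pow, EuclideanSpace.norm_sq_eq, Finset.sum_div]
  refine Finset.sum_le_sum fun i _ => ?_
  calc ∑ t, (c t i * y i) ^ 2 / σt t i ^ 2 = ‖y i‖ ^ 2 * ∑ t, c t i ^ 2 / σt t i ^ 2 := by
        rw [Finset.mul_sum]
        refine Finset.sum_congr rfl fun t _ => ?_
        rw [Real.norm_eq_abs, sq_abs]
        ring
    _ ≤ ‖y i‖ ^ 2 * (1 / σ ^ 2) := by gcongr; exact hfilter i
    _ = ‖y i‖ ^ 2 / σ ^ 2 := by ring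

theorem guided_denoising_image_dominance_general
    {ι : Type*} [Fintype ι] (d : ℕ) (σ : ℝ) (hσ : 0 < σ)
    (σt c m : ι → Fin d → ℝ) (hσt : ∀ t i, 0 < σt t i)
    (hfilter : ∀ i, ∑ t, c t i ^ 2 / σt t i ^ 2 ≤ 1 / σ ^ 2)
    (x x' : EuclideanSpace ℝ (Fin d))
    (E : Set (ι × Fin d → ℝ)) (hE : MeasurableSet E) (a : ℝ)
    (h : (Measure.pi fun p : ι × Fin d =>
            gaussianReal (m p.1 p.2 + c p.1 p.2 * x p.2)
              ⟨σt p.1 p.2 ^ 2, sq_nonneg (σt p.1 p.2)⟩) E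
          ≥ ENNReal.ofReal (stdNormalCDF a)) :
    (Measure.pi fun p : ι × Fin d =>
        gaussianReal (m p.1 p.2 + c p.1 p.2 * x' p.2)
          ⟨σt p.1 p.2 ^ 2, sq_nonneg (σt p.1 p.2)⟩) E
      ≥ ENNReal.ofReal (stdNormalCDF (a - ‖x - x'‖ / σ)) := by
  have hv : ∀ p : ι × Fin d, (⟨σt p.1 p.2 ^ 2, sq_nonneg _⟩ : ℝ≥0) ≠ 0 := fun p =>
    NNReal.coe_ne_zero.1 (pow_pos (hσt p.1 p.2) 2).ne'
  have key := pi_gaussianReal_add_apply_ge (fun p => m p.1 p.2 + c p.1 p.2 * x p.2)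
    (fun p => c p.1 p.2 * (x' - x) p.2) (v := fun p => ⟨σt p.1 p.2 ^ 2, sq_nonneg _⟩) hv hE h
  have hmean : ∀ p : ι × Fin d,
      m p.1 p.2 + c p.1 p.2 * x p.2 + c p.1 p.2 * (x' - x) p.2 = m p.1 p.2 + c p.1 p.2 * x' p.2 :=
    fun p => by rw [PiLp.sub_apply]; ring
  simp only [hmean] at key
  refine le_trans (ENNReal.ofReal_le_ofReal (stdNormalCDF_mono ?_)) key
  rw [norm_sub_rev]
  gcongr
  exact (sqrt_le_sqrt (sum_sq_mul_div_le_norm_div_sq hfilter _)).trans_eq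
    (sqrt_sq (by positivity))

/-- Mechanism-level whole-image dominance underlying Theorem 1: the product over all
steps `t` and pixels `i` of the Gaussian releases `N(m t i + c t i * x i, σt t i ^ 2)`,
with the per-pixel filter guarantee `∑ t, c t i ^ 2 / σt t i ^ 2 ≤ 1 / σ ^ 2` for every
pixel `i`, is `(‖x - x'‖₂/σ)`-GDP in CDF form. -/
theorem guided_denoising_image_dominance
    {ι : Type*} [Fintype ι] (d : ℕ) (hd : 1 ≤ d) (σ : ℝ) (hσ : 0 < σ)
    (σt c m : ι → Fin d → ℝ) (hσt : ∀ t i, 0 < σt t i)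
    (hfilter : ∀ i, ∑ t, c t i ^ 2 / σt t i ^ 2 ≤ 1 / σ ^ 2)
    (x x' : EuclideanSpace ℝ (Fin d))
    (E : Set (ι × Fin d → ℝ)) (hE : MeasurableSet E) (a : ℝ)
    (h : (Measure.pi fun p : ι × Fin d =>
            gaussianReal (m p.1 p.2 + c p.1 p.2 * x p.2)
              ⟨σt p.1 p.2 ^ 2, sq_nonneg (σt p.1 p.2)⟩) E
          ≥ ENNReal.ofReal (stdNormalCDF a)) :
    (Measure.pi fun p : ι × Fin d =>
        gaussianReal (m p.1 p.2 + c p.1 p.2 * x' p.2)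
          ⟨σt p.1 p.2 ^ 2, sq_nonneg (σt p.1 p.2)⟩) E
      ≥ ENNReal.ofReal (stdNormalCDF (a - ‖x - x'‖ / σ)) :=
  guided_denoising_image_dominance_general d σ hσ σt c m hσt hfilter x x' E hE a h
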